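/- arXiv:2411.13736 — 7 statements merged into one kernel-verified Lean document; each statement's English description precedes it below -/
import Mathlib

section
/- Let α > −1, β > −1−α, b ≠ 0 be real. The operator D with F₂(t) = tI, F₁(t) = [[α+1+β−t, 0],[−b(β−2)t, α+1−t]], F₀ = [[−1, 0],[b(α+1), 0]], and the weight W(t) = e^{−t} t^α [[t^β+b²t², bt],[bt, 1]] satisfy the three symmetry equations on (0,∞): F₂* W = W F₂, 2(W F₂)' = W F₁ + F₁* W, and (W F₂)'' = (W F₁)' − W F₀ + F₀* W. -/
/-!
On `(0, ∞)` all entries of `W`, `W F₂ = t W` and `W F₁` are combinations of the functions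
`e^{-t} t^γ`, whose derivatives are again such combinations. The heart of the matter is
`(W F₂)' = W F₁ - A` with the skew-symmetric `A = b e^{-t} t^{α+1} [[0, -1], [1, 0]]`.
Since also `F₁ᵀ W = W F₁ - 2A`, this is the second equation; differentiating it once more
reduces the third equation to `A' = W F₀ - F₀ᵀ W`.
-/

open Matrix Filter Topology

noncomputable def expRpow (γ t : ℝ) : ℝ := Real.exp (-t) * t ^ γ

theorem hasDerivAt_expRpow (γ : ℝ) {t : ℝ} (ht : 0 < t) :
    HasDerivAt (expRpow γ) (γ * expRpow (γ - 1) t - expRpow γ t) t := by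
  have h := (hasDerivAt_neg t).exp.fun_mul (Real.hasDerivAt_rpow_const (p := γ) (Or.inl ht.ne'))
  refine h.congr_deriv ?_
  rw [expRpow, expRpow, Real.rpow_sub_one ht.ne']
  ring

theorem Matrix.differentiableAt_mul_apply {m n p : Type*} [Fintype n]
    {A : ℝ → Matrix m n ℝ} {B : ℝ → Matrix n p ℝ} {t : ℝ}
    (hA : ∀ i j, DifferentiableAt ℝ (fun s => A s i j) t)
    (hB : ∀ i j, DifferentiableAt ℝ (fun s => B s i j) t) (i : m) (j : p) :
    DifferentiableAt ℝ (fun s => (A s * B s) i j) t := by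
  simp only [Matrix.mul_apply]
  exact DifferentiableAt.fun_sum fun k _ => (hA i k).mul (hB k j)

theorem Matrix.hasDerivAt_apply_of_eventuallyEq_fin_two {f : ℝ → Matrix (Fin 2) (Fin 2) ℝ}
    {a b c d : ℝ → ℝ} {a' b' c' d' t : ℝ}
    (hf : f =ᶠ[𝓝 t] fun s => !![a s, b s; c s, d s])
    (ha : HasDerivAt a a' t) (hb : HasDerivAt b b' t) (hc : HasDerivAt c c' t)
    (hd : HasDerivAt d d' t) (i j : Fin 2) :
    HasDerivAt (fun s => f s i j) (!![a', b'; c', d'] i j) t := by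
  refine HasDerivAt.congr_of_eventuallyEq ?_ (hf.mono fun s hs => congrFun (congrFun hs i) j)
  fin_cases i <;> fin_cases j <;> simpa

namespace FirstLaguerreFamily

variable (α β b : ℝ)

noncomputable def weight (t : ℝ) : Matrix (Fin 2) (Fin 2) ℝ :=
  Real.exp (-t) • (t ^ α) • !![t ^ β + b ^ 2 * t ^ 2, b * t; b * t, 1]

def F₁ (t : ℝ) : Matrix (Fin 2) (Fin 2) ℝ :=
  !![α + 1 + β - t, 0; -b * (β - 2) * t, α + 1 - t]

def F₀ : Matrix (Fin 2) (Fin 2) ℝ := !![-1, 0; b * (α + 1), 0]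

noncomputable def skewPart (t : ℝ) : Matrix (Fin 2) (Fin 2) ℝ :=
  (b * expRpow (α + 1) t) • !![0, -1; 1, 0]

variable {α β b} {t : ℝ}

theorem weight_mul_smul_one (ht : 0 < t) :
    weight α β b t * (t • 1) =
      !![expRpow (α + β + 1) t + b ^ 2 * expRpow (α + 3) t, b * expRpow (α + 2) t;
        b * expRpow (α + 2) t, expRpow (α + 1) t] := by
  ext i j
  fin_cases i <;> fin_cases j <;>
    simp [weight, expRpow, Real.rpow_add ht] <;> ring

theorem transpose_F₁_mul_weight (ht : 0 < t) :
    (F₁ α β b t)ᵀ * weight α β b t = weight α β b t * F₁ α β b t - 2 • skewPart α b t := by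
  ext i j
  fin_cases i <;> fin_cases j <;>
    simp [weight, F₁, skewPart, expRpow, Matrix.mul_apply, Real.rpow_add ht] <;> ring

theorem hasDerivAt_weight_mul_smul_one_apply (ht : 0 < t) (i j : Fin 2) :
    HasDerivAt (fun s => (weight α β b s * (s • 1)) i j)
      ((weight α β b t * F₁ α β b t - skewPart α b t) i j) t := by
  have hE := fun γ => hasDerivAt_expRpow γ ht
  have h := Matrix.hasDerivAt_apply_of_eventuallyEq_fin_two
    (eventually_gt_nhds ht |>.mono fun s hs => weight_mul_smul_one (α := α) (β := β) (b := b) hs)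
    ((hE _).add ((hE _).const_mul _)) ((hE _).const_mul b) ((hE _).const_mul b) (hE _) i j
  refine h.congr_deriv ?_
  fin_cases i <;> fin_cases j <;>
    simp [weight, F₁, skewPart, expRpow, Real.rpow_add ht, Real.rpow_sub ht] <;>
    field_simp <;> ring

theorem hasDerivAt_skewPart_apply (ht : 0 < t) (i j : Fin 2) :
    HasDerivAt (fun s => skewPart α b s i j)
      ((weight α β b t * F₀ α b - (F₀ α b)ᵀ * weight α β b t) i j) t := by
  refine (((hasDerivAt_expRpow (α + 1) ht).const_mul b).mul_const
    (!![0, -1; 1, (0 : ℝ)] i j)).congr_deriv ?_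
  fin_cases i <;> fin_cases j <;>
    simp [weight, F₀, expRpow, Matrix.mul_apply, Real.rpow_add ht] <;> ring

theorem differentiableAt_weight_mul_F₁_apply (ht : 0 < t) (i j : Fin 2) :
    DifferentiableAt ℝ (fun s => (weight α β b s * F₁ α β b s) i j) t := by
  refine Matrix.differentiableAt_mul_apply (fun k l => ?_) (fun k l => ?_) i j <;>
    fin_cases k <;> fin_cases l <;> simp [weight, F₁] <;> fun_prop (disch := positivity)

end FirstLaguerreFamily

open FirstLaguerreFamily in
theorem first_family_symmetry_equations_general (α β b : ℝ)
    (W F₁ F₂ : ℝ → Matrix (Fin 2) (Fin 2) ℝ) (F₀ : Matrix (Fin 2) (Fin 2) ℝ)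
    (hW : ∀ t : ℝ, W t = Real.exp (-t) • (t ^ α) •
      !![t ^ β + b ^ 2 * t ^ 2, b * t; b * t, 1])
    (hF₂ : ∀ t : ℝ, F₂ t = t • (1 : Matrix (Fin 2) (Fin 2) ℝ))
    (hF₁ : ∀ t : ℝ, F₁ t = !![α + 1 + β - t, 0; -b * (β - 2) * t, α + 1 - t])
    (hF₀ : F₀ = !![-1, 0; b * (α + 1), 0]) :
    ∀ t ∈ Set.Ioi (0 : ℝ),
      ((F₂ t)ᵀ * W t = W t * F₂ t) ∧
      (∀ i j : Fin 2,
        2 * deriv (fun s => (W s * F₂ s) i j) t = (W t * F₁ t + (F₁ t)ᵀ * W t) i j) ∧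
      (∀ i j : Fin 2,
        deriv (deriv (fun s => (W s * F₂ s) i j)) t =
          deriv (fun s => (W s * F₁ s) i j) t - (W t * F₀) i j + (F₀ᵀ * W t) i j) := by
  intro t (ht : 0 < t)
  obtain rfl : W = weight α β b := funext hW
  obtain rfl : F₂ = fun t => t • 1 := funext hF₂
  obtain rfl : F₁ = FirstLaguerreFamily.F₁ α β b := funext hF₁
  obtain rfl : F₀ = FirstLaguerreFamily.F₀ α b := hF₀
  have hderiv (i j : Fin 2) : deriv (fun s => (weight α β b s * (s • 1)) i j) =ᶠ[𝓝 t]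
      fun s => (weight α β b s * FirstLaguerreFamily.F₁ α β b s) i j - skewPart α b s i j :=
    (eventually_gt_nhds ht).mono fun s hs => (hasDerivAt_weight_mul_smul_one_apply hs i j).deriv
  have hskew (i j : Fin 2) := hasDerivAt_skewPart_apply (α := α) (β := β) (b := b) ht i j
  beta_reduce
  refine ⟨by simp, fun i j => ?_, fun i j => ?_⟩
  · rw [(hasDerivAt_weight_mul_smul_one_apply ht i j).deriv, transpose_F₁_mul_weight ht]
    simp only [two_nsmul, Matrix.add_apply, Matrix.sub_apply]
    ring
  · rw [(hderiv i j).deriv_eq, deriv_fun_sub (differentiableAt_weight_mul_F₁_apply ht i j)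
      (hskew i j).differentiableAt, (hskew i j).deriv, Matrix.sub_apply]
    ring

/-- the operator of the first Laguerre family is `W`-symmetric:
the three symmetry equations hold on `(0, ∞)` (derivatives entrywise). -/
theorem first_family_symmetry_equations (α β b : ℝ)
    (hα : -1 < α) (hβ : -1 - α < β) (hb : b ≠ 0)
    (W F₁ F₂ : ℝ → Matrix (Fin 2) (Fin 2) ℝ) (F₀ : Matrix (Fin 2) (Fin 2) ℝ)
    (hW : ∀ t : ℝ, W t = Real.exp (-t) • (t ^ α) •
      !![t ^ β + b ^ 2 * t ^ 2, b * t; b * t, 1])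
    (hF₂ : ∀ t : ℝ, F₂ t = t • (1 : Matrix (Fin 2) (Fin 2) ℝ))
    (hF₁ : ∀ t : ℝ, F₁ t = !![α + 1 + β - t, 0; -b * (β - 2) * t, α + 1 - t])
    (hF₀ : F₀ = !![-1, 0; b * (α + 1), 0]) :
    ∀ t ∈ Set.Ioi (0 : ℝ),
      ((F₂ t)ᵀ * W t = W t * F₂ t) ∧
      (∀ i j : Fin 2,
        2 * deriv (fun s => (W s * F₂ s) i j) t = (W t * F₁ t + (F₁ t)ᵀ * W t) i j) ∧
      (∀ i j : Fin 2,
        deriv (deriv (fun s => (W s * F₂ s) i j)) t =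
          deriv (fun s => (W s * F₁ s) i j) t - (W t * F₀) i j + (F₀ᵀ * W t) i j) :=
  first_family_symmetry_equations_general α β b W F₁ F₂ F₀ hW hF₂ hF₁ hF₀
end

section
/- Let α > −1, β > −1−α, b ≠ 0 and W(t) = e^{−t} t^α [[t^β+b²t², bt],[bt, 1]]. If V₀ is a 2×2 complex matrix with W(t) V₀ = V₀* W(t) for all t ∈ (0,∞), then V₀ is a scalar multiple of the identity. -/
/-!
Since `W t = e^{-t} t^α M t` with a positive scalar factor and `M t` real symmetric, the relation
is equivalent to `M t V₀ = V₀ᴴ M t`. Writing `V₀ = !![p, q; r, s]`, its `(0,0)` and `(0,1)`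
entries are identities `(t^β + b²t²) w + t y + z = 0` on `(0, ∞)`, with `w = p - p̄` resp.
`w = q` and `z = -r̄`. Such an identity forces `w = y = z = 0`: the second difference
`f(4t) - 3f(2t) + 2f(t)` kills `t y + z`, and at `t = 1, 2` it leaves two multiples of `w` that
cannot both vanish unless `2^β = 4` and `6 + 6b² = 0`. Hence `p` is real, `q = r = 0` and
`s = p̄ = p`.
-/

open Matrix ComplexConjugate

lemma coeffs_eq_zero_of_rpow_add_sq_affine {β b : ℝ} (hb : b ≠ 0) {w y z : ℂ}
    (h : ∀ t : ℝ, 0 < t → ((t ^ β + b ^ 2 * t ^ 2 : ℝ) : ℂ) * w + t * y + z = 0) :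
    w = 0 ∧ y = 0 ∧ z = 0 := by
  have h4 : (((4 : ℝ) ^ β : ℝ) : ℂ) = (((2 : ℝ) ^ β : ℝ) : ℂ) ^ 2 := by
    rw [show (4 : ℝ) = 2 * 2 by norm_num, Real.mul_rpow zero_le_two zero_le_two]
    push_cast; ring
  have h8 : (((8 : ℝ) ^ β : ℝ) : ℂ) = (((2 : ℝ) ^ β : ℝ) : ℂ) ^ 3 := by
    rw [show (8 : ℝ) = 2 * 4 by norm_num, Real.mul_rpow zero_le_two zero_le_four]
    push_cast [h4]; ring
  have e1 := h 1 one_pos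
  have e2 := h 2 two_pos
  have e4 := h 4 four_pos
  have e8 := h 8 (by norm_num)
  push_cast [Real.one_rpow, h4, h8] at e1 e2 e4 e8
  generalize (((2 : ℝ) ^ β : ℝ) : ℂ) = κ at e2 e4 e8
  have hbC : (b : ℂ) ≠ 0 := Complex.ofReal_ne_zero.2 hb
  have hA : ((κ - 1) * (κ - 2) + 6 * b ^ 2) * w = 0 := by
    linear_combination e4 - 3 * e2 + 2 * e1
  have hB : (κ * (κ - 1) * (κ - 2) + 24 * b ^ 2) * w = 0 := by
    linear_combination e8 - 3 * e4 + 2 * e2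
  have hκw : (κ - 4) * w = 0 := by
    have : (b : ℂ) ^ 2 * ((κ - 4) * w) = 0 := by linear_combination (κ * hA - hB) / 6
    simpa [hbC] using this
  have hw : w = 0 := by
    by_contra hw
    obtain rfl : κ = 4 := sub_eq_zero.1 ((mul_eq_zero.1 hκw).resolve_right hw)
    have hpos : ((6 + 6 * b ^ 2 : ℝ) : ℂ) ≠ 0 := Complex.ofReal_ne_zero.2 (by positivity)
    exact hw ((mul_eq_zero.1 (by push_cast; linear_combination hA)).resolve_left hpos)
  have hy : y = 0 := by linear_combination e2 - e1 - (κ - 1 + 3 * b ^ 2) * hw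
  exact ⟨hw, hy, by linear_combination e1 - hy - (1 + b ^ 2) * hw⟩

lemma mul_eq_conjTranspose_mul_of_smul {n 𝕜 : Type*} [Fintype n] [Field 𝕜] [StarRing 𝕜]
    {c : 𝕜} (hc : c ≠ 0) {M V : Matrix n n 𝕜} (h : (c • M) * V = Vᴴ * (c • M)) :
    M * V = Vᴴ * M := by
  rw [smul_mul_assoc, mul_smul_comm] at h
  exact smul_right_injective _ hc h

lemma entries_of_mul_eq_conjTranspose_mul {x u : ℝ} {V : Matrix (Fin 2) (Fin 2) ℂ}
    (h : !![(x : ℂ), u; u, 1] * V = Vᴴ * !![(x : ℂ), u; u, 1]) :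
    x * (V 0 0 - conj (V 0 0)) + u * (V 1 0 - conj (V 1 0)) = 0 ∧
      x * V 0 1 + u * (V 1 1 - conj (V 0 0)) - conj (V 1 0) = 0 := by
  have h00 := congrFun₂ h 0 0
  have h01 := congrFun₂ h 0 1
  simp only [mul_apply, Fin.sum_univ_two, conjTranspose_apply, of_apply, cons_val', cons_val_zero,
    cons_val_one, empty_val', cons_val_fin_one, Complex.star_def, mul_one]
    at h00 h01
  constructor
  · linear_combination h00
  · linear_combination h01

theorem first_family_weight_irreducible_general (α β b : ℝ) (hb : b ≠ 0)
    (W : ℝ → Matrix (Fin 2) (Fin 2) ℂ)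
    (hW : ∀ t : ℝ, W t =
      !![((Real.exp (-t) * t ^ α * (t ^ β + b ^ 2 * t ^ 2) : ℝ) : ℂ),
         ((Real.exp (-t) * t ^ α * (b * t) : ℝ) : ℂ);
         ((Real.exp (-t) * t ^ α * (b * t) : ℝ) : ℂ),
         ((Real.exp (-t) * t ^ α : ℝ) : ℂ)])
    (V₀ : Matrix (Fin 2) (Fin 2) ℂ)
    (hV : ∀ t ∈ Set.Ioi (0 : ℝ), W t * V₀ = V₀ᴴ * W t) :
    ∃ c : ℂ, V₀ = c • (1 : Matrix (Fin 2) (Fin 2) ℂ) := by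
  have hM : ∀ t : ℝ, 0 < t →
      !![((t ^ β + b ^ 2 * t ^ 2 : ℝ) : ℂ), ((b * t : ℝ) : ℂ); ((b * t : ℝ) : ℂ), 1] * V₀ =
        V₀ᴴ * !![((t ^ β + b ^ 2 * t ^ 2 : ℝ) : ℂ), ((b * t : ℝ) : ℂ); ((b * t : ℝ) : ℂ), 1] := by
    intro t ht
    have hc : ((Real.exp (-t) * t ^ α : ℝ) : ℂ) ≠ 0 :=
      Complex.ofReal_ne_zero.2 (by positivity)
    refine mul_eq_conjTranspose_mul_of_smul hc ?_
    convert hV t ht using 2 <;>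
    · rw [hW]
      ext i j
      fin_cases i <;> fin_cases j <;> simp
  have hentries := fun t ht => entries_of_mul_eq_conjTranspose_mul (hM t ht)
  obtain ⟨hp, -, -⟩ := coeffs_eq_zero_of_rpow_add_sq_affine hb
    (w := V₀ 0 0 - conj (V₀ 0 0)) (y := b * (V₀ 1 0 - conj (V₀ 1 0))) (z := 0)
    fun t ht => by have h := (hentries t ht).1; push_cast at h ⊢; linear_combination h
  obtain ⟨hq, hs, hr⟩ := coeffs_eq_zero_of_rpow_add_sq_affine hb
    (w := V₀ 0 1) (y := b * (V₀ 1 1 - conj (V₀ 0 0))) (z := - conj (V₀ 1 0))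
    fun t ht => by have h := (hentries t ht).2; push_cast at h ⊢; linear_combination h
  have hbC : (b : ℂ) ≠ 0 := Complex.ofReal_ne_zero.2 hb
  have hs' : V₀ 1 1 = V₀ 0 0 := by
    linear_combination (mul_eq_zero.1 hs).resolve_left hbC - hp
  have hr' : V₀ 1 0 = 0 := by simpa using hr
  refine ⟨V₀ 0 0, ?_⟩
  rw [eta_fin_two V₀, one_fin_two, hq, hr', hs']
  simp

/-- irreducibility of the first-family weight: any complex matrix
`V₀` with `W(t) V₀ = V₀* W(t)` for all `t > 0` is scalar. -/
theorem first_family_weight_irreducible (α β b : ℝ)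
    (hα : -1 < α) (hβ : -1 - α < β) (hb : b ≠ 0)
    (W : ℝ → Matrix (Fin 2) (Fin 2) ℂ)
    (hW : ∀ t : ℝ, W t =
      !![((Real.exp (-t) * t ^ α * (t ^ β + b ^ 2 * t ^ 2) : ℝ) : ℂ),
         ((Real.exp (-t) * t ^ α * (b * t) : ℝ) : ℂ);
         ((Real.exp (-t) * t ^ α * (b * t) : ℝ) : ℂ),
         ((Real.exp (-t) * t ^ α : ℝ) : ℂ)])
    (V₀ : Matrix (Fin 2) (Fin 2) ℂ)
    (hV : ∀ t ∈ Set.Ioi (0 : ℝ), W t * V₀ = V₀ᴴ * W t) :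
    ∃ c : ℂ, V₀ = c • (1 : Matrix (Fin 2) (Fin 2) ℂ) :=
  first_family_weight_irreducible_general α β b hb W hW V₀ hV
end

section
/- For α > −1 and 0 < |b| < 1 (b real), the matrix W(t) = e^{−t} t^α [[t⁴ + 4b²(α+2)t²(α+2−t), −bt(t−2(α+2))],[−bt(t−2(α+2)), 1]] is positive definite for all t ∈ (0,∞). -/
/-! The scalar factor `e^{-t} t^α` is positive for `t > 0`, and the determinant of the polynomial
part collapses to `(1 - b²) t⁴` because `b² t² (t - 2c)² = b² t⁴ + 4 b² c t² (c - t)`. -/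

theorem det_secondFamilyMatrix {R : Type*} [CommRing R] (b c t : R) :
    !![t ^ 4 + 4 * b ^ 2 * c * t ^ 2 * (c - t), -b * t * (t - 2 * c);
      -b * t * (t - 2 * c), 1].det = (1 - b ^ 2) * t ^ 4 := by
  rw [Matrix.det_fin_two_of]
  ring

theorem second_family_weight_posdef_general (α b : ℝ)
    (hb1 : |b| < 1)
    (W : ℝ → Matrix (Fin 2) (Fin 2) ℝ)
    (hW : ∀ t : ℝ, W t = Real.exp (-t) • (t ^ α) •
      !![t ^ 4 + 4 * b ^ 2 * (α + 2) * t ^ 2 * (α + 2 - t), -b * t * (t - 2 * (α + 2));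
         -b * t * (t - 2 * (α + 2)), 1]) :
    ∀ t ∈ Set.Ioi (0 : ℝ), 0 < W t 1 1 ∧ 0 < (W t).det := by
  intro t (ht : 0 < t)
  have hscale : 0 < Real.exp (-t) * t ^ α := by positivity
  have hb2 : 0 < 1 - b ^ 2 := sub_pos.2 ((sq_lt_one_iff_abs_lt_one b).2 hb1)
  rw [hW, smul_smul]
  constructor
  · simpa using hscale
  · rw [Matrix.det_smul, det_secondFamilyMatrix]
    positivity

/-- the weight of the second Laguerre family is positive definite
on `(0, ∞)`: its (2,2) entry and its determinant are positive. -/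
theorem second_family_weight_posdef (α b : ℝ)
    (hα : -1 < α) (hb : 0 < |b|) (hb1 : |b| < 1)
    (W : ℝ → Matrix (Fin 2) (Fin 2) ℝ)
    (hW : ∀ t : ℝ, W t = Real.exp (-t) • (t ^ α) •
      !![t ^ 4 + 4 * b ^ 2 * (α + 2) * t ^ 2 * (α + 2 - t), -b * t * (t - 2 * (α + 2));
         -b * t * (t - 2 * (α + 2)), 1]) :
    ∀ t ∈ Set.Ioi (0 : ℝ), 0 < W t 1 1 ∧ 0 < (W t).det :=
  second_family_weight_posdef_general α b hb1 W hW
end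

section
/- Let α > −1, 0 < |b| < 1. The pair D = tI∂² + [[α+5−t, 0],[−4b(α+2)t, α+1−t]]∂ − [[2,0],[−2b(α+2)(α+1),0]] and W(t) = e^{−t} t^α [[t⁴+4b²(α+2)t²(α+2−t), −bt(t−2(α+2))],[−bt(t−2(α+2)), 1]] satisfy the symmetry equations 2(WF₂)' = WF₁ + F₁ᵀW and (WF₂)'' = (WF₁)' − WF₀ + F₀ᵀW on (0,∞), where F₂(t)=tI, F₁(t)=[[α+5−t,0],[−4b(α+2)t, α+1−t]], F₀=[[−2,0],[2b(α+2)(α+1),0]]. -/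
open Matrix Polynomial

/-!
With `ω_α t = e^{-t} t^α`, every entry of `W F₂`, `W F₁`, `W F₀` and `F₀ᵀ W` is `ω_α` times a
polynomial. The identity `(ω_α p)' = ω_{α-1} ((α - t) p + t p')` turns both symmetry equations,
after division by `ω_{α-2}`, into identities between polynomial matrices, which are checked
entrywise.
-/

noncomputable def laguerreWeight (α t : ℝ) : ℝ := Real.exp (-t) * t ^ α

noncomputable def laguerreDeriv (α : ℝ) (p : ℝ[X]) : ℝ[X] := (C α - X) * p + X * derivative p

lemma laguerreWeight_eq_mul_self {t : ℝ} (ht : 0 < t) (α : ℝ) :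
    laguerreWeight α t = laguerreWeight (α - 1) t * t := by
  rw [laguerreWeight, laguerreWeight, mul_assoc, ← Real.rpow_add_one ht.ne', sub_add_cancel]

lemma hasDerivAt_laguerreWeight {t : ℝ} (ht : 0 < t) (α : ℝ) :
    HasDerivAt (laguerreWeight α) (laguerreWeight (α - 1) t * (α - t)) t := by
  have hexp : HasDerivAt (fun s : ℝ => Real.exp (-s)) (-Real.exp (-t)) t :=
    ((Real.hasDerivAt_exp (-t)).comp t (hasDerivAt_neg t)).congr_deriv (by ring)
  refine (hexp.mul (Real.hasDerivAt_rpow_const (p := α) (Or.inl ht.ne'))).congr_deriv ?_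
  rw [laguerreWeight, Real.rpow_sub_one ht.ne' α]
  field_simp
  ring

lemma hasDerivAt_laguerreWeight_mul_eval {t : ℝ} (ht : 0 < t) (α : ℝ) (p : ℝ[X]) :
    HasDerivAt (fun s => laguerreWeight α s * p.eval s)
      (laguerreWeight (α - 1) t * (laguerreDeriv α p).eval t) t := by
  refine ((hasDerivAt_laguerreWeight ht α).mul (p.hasDerivAt t)).congr_deriv ?_
  rw [laguerreWeight_eq_mul_self ht α, laguerreDeriv]
  simp only [eval_add, eval_mul, eval_sub, eval_C, eval_X]
  ring

lemma deriv_laguerreWeight_mul_eval {t : ℝ} (ht : 0 < t) (α : ℝ) (p : ℝ[X]) :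
    deriv (fun s => laguerreWeight α s * p.eval s) t =
      laguerreWeight (α - 1) t * (laguerreDeriv α p).eval t :=
  (hasDerivAt_laguerreWeight_mul_eval ht α p).deriv

lemma deriv_deriv_laguerreWeight_mul_eval {t : ℝ} (ht : 0 < t) (α : ℝ) (p : ℝ[X]) :
    deriv (deriv fun s => laguerreWeight α s * p.eval s) t =
      laguerreWeight (α - 1 - 1) t * (laguerreDeriv (α - 1) (laguerreDeriv α p)).eval t := by
  have hderiv : deriv (fun s => laguerreWeight α s * p.eval s) =ᶠ[nhds t]
      fun s => laguerreWeight (α - 1) s * (laguerreDeriv α p).eval s := by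
    filter_upwards [Ioi_mem_nhds ht] with s hs using deriv_laguerreWeight_mul_eval hs α p
  rw [hderiv.deriv_eq, deriv_laguerreWeight_mul_eval ht]

lemma smul_map_eval_mul_map_eval {R l m n : Type*} [CommSemiring R] [Fintype m] (c s : R)
    (A : Matrix l m R[X]) (B : Matrix m n R[X]) (i : l) (j : n) :
    (c • A.map (eval s) * B.map (eval s)) i j = c * ((A * B) i j).eval s := by
  rw [Matrix.smul_mul, Matrix.smul_apply, smul_eq_mul, ← coe_evalRingHom, ← Matrix.map_mul,
    map_apply]

lemma map_eval_mul_smul_map_eval {R l m n : Type*} [CommSemiring R] [Fintype m] (c s : R)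
    (A : Matrix l m R[X]) (B : Matrix m n R[X]) (i : l) (j : n) :
    (A.map (eval s) * (c • B.map (eval s))) i j = c * ((A * B) i j).eval s := by
  rw [Matrix.mul_smul, Matrix.smul_apply, smul_eq_mul, ← coe_evalRingHom, ← Matrix.map_mul,
    map_apply]

namespace SecondLaguerreFamily

variable (α b : ℝ)

noncomputable def weightPoly : Matrix (Fin 2) (Fin 2) ℝ[X] :=
  !![X ^ 4 + C (4 * b ^ 2 * (α + 2)) * X ^ 2 * (C (α + 2) - X), -C b * X * (X - C (2 * (α + 2)));
     -C b * X * (X - C (2 * (α + 2))), 1]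

noncomputable def coeffPoly₂ : Matrix (Fin 2) (Fin 2) ℝ[X] := (X : ℝ[X]) • 1

noncomputable def coeffPoly₁ : Matrix (Fin 2) (Fin 2) ℝ[X] :=
  !![C (α + 5) - X, 0; -C (4 * b * (α + 2)) * X, C (α + 1) - X]

noncomputable def coeffPoly₀ : Matrix (Fin 2) (Fin 2) ℝ[X] :=
  !![-2, 0; C (2 * b * (α + 2) * (α + 1)), 0]

lemma weightPoly_map_eval (t : ℝ) :
    (weightPoly α b).map (eval t) =
      !![t ^ 4 + 4 * b ^ 2 * (α + 2) * t ^ 2 * (α + 2 - t), -b * t * (t - 2 * (α + 2));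
         -b * t * (t - 2 * (α + 2)), 1] := by
  ext i j
  fin_cases i <;> fin_cases j <;> simp [weightPoly]

lemma coeffPoly₂_map_eval (t : ℝ) : coeffPoly₂.map (eval t) = t • (1 : Matrix (Fin 2) (Fin 2) ℝ) := by
  ext i j
  fin_cases i <;> fin_cases j <;> simp [coeffPoly₂]

lemma coeffPoly₁_map_eval (t : ℝ) :
    (coeffPoly₁ α b).map (eval t) = !![α + 5 - t, 0; -4 * b * (α + 2) * t, α + 1 - t] := by
  ext i j
  fin_cases i <;> fin_cases j <;> simp [coeffPoly₁]

lemma coeffPoly₀_map_eval (t : ℝ) :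
    (coeffPoly₀ α b).map (eval t) = !![-2, 0; 2 * b * (α + 2) * (α + 1), 0] := by
  ext i j
  fin_cases i <;> fin_cases j <;> simp [coeffPoly₀]

lemma first_symmetry_equation_poly (i j : Fin 2) :
    2 * laguerreDeriv α ((weightPoly α b * coeffPoly₂) i j) =
      X * (weightPoly α b * coeffPoly₁ α b + (coeffPoly₁ α b)ᵀ * weightPoly α b) i j := by
  refine Polynomial.funext fun r => ?_
  fin_cases i <;> fin_cases j <;>
    simp [weightPoly, coeffPoly₂, coeffPoly₁, laguerreDeriv, Matrix.mul_apply, derivative_pow] <;>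
    ring

lemma second_symmetry_equation_poly (i j : Fin 2) :
    laguerreDeriv (α - 1) (laguerreDeriv α ((weightPoly α b * coeffPoly₂) i j)) =
      X * laguerreDeriv α ((weightPoly α b * coeffPoly₁ α b) i j) -
        X ^ 2 * (weightPoly α b * coeffPoly₀ α b - (coeffPoly₀ α b)ᵀ * weightPoly α b) i j := by
  refine Polynomial.funext fun r => ?_
  fin_cases i <;> fin_cases j <;>
    simp [weightPoly, coeffPoly₂, coeffPoly₀, coeffPoly₁, laguerreDeriv, Matrix.mul_apply,
      derivative_pow] <;>
    ring

end SecondLaguerreFamily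

open SecondLaguerreFamily

theorem second_family_symmetry_equations_general (α b : ℝ)
    (W F₁ F₂ : ℝ → Matrix (Fin 2) (Fin 2) ℝ) (F₀ : Matrix (Fin 2) (Fin 2) ℝ)
    (hW : ∀ t : ℝ, W t = Real.exp (-t) • (t ^ α) •
      !![t ^ 4 + 4 * b ^ 2 * (α + 2) * t ^ 2 * (α + 2 - t), -b * t * (t - 2 * (α + 2));
         -b * t * (t - 2 * (α + 2)), 1])
    (hF₂ : ∀ t : ℝ, F₂ t = t • (1 : Matrix (Fin 2) (Fin 2) ℝ))
    (hF₁ : ∀ t : ℝ, F₁ t = !![α + 5 - t, 0; -4 * b * (α + 2) * t, α + 1 - t])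
    (hF₀ : F₀ = !![-2, 0; 2 * b * (α + 2) * (α + 1), 0]) :
    ∀ t ∈ Set.Ioi (0 : ℝ),
      (∀ i j : Fin 2,
        2 * deriv (fun s => (W s * F₂ s) i j) t = (W t * F₁ t + (F₁ t)ᵀ * W t) i j) ∧
      (∀ i j : Fin 2,
        deriv (deriv (fun s => (W s * F₂ s) i j)) t =
          deriv (fun s => (W s * F₁ s) i j) t - (W t * F₀) i j + (F₀ᵀ * W t) i j) := by
  intro t ht
  have hW' (s : ℝ) : W s = laguerreWeight α s • (weightPoly α b).map (eval s) := by
    rw [hW, smul_smul, weightPoly_map_eval]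
    rfl
  simp only [hW', hF₂, hF₁, hF₀, ← coeffPoly₂_map_eval, ← coeffPoly₁_map_eval α b,
    ← coeffPoly₀_map_eval α b t, ← transpose_map, Matrix.add_apply, smul_map_eval_mul_map_eval,
    map_eval_mul_smul_map_eval, deriv_laguerreWeight_mul_eval ht,
    deriv_deriv_laguerreWeight_mul_eval ht]
  refine ⟨fun i j => ?_, fun i j => ?_⟩
  · have h := congrArg (eval t) (first_symmetry_equation_poly α b i j)
    simp only [eval_mul, eval_ofNat, eval_X, Matrix.add_apply, eval_add] at h
    rw [laguerreWeight_eq_mul_self ht α]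
    linear_combination laguerreWeight (α - 1) t * h
  · have h := congrArg (eval t) (second_symmetry_equation_poly α b i j)
    simp only [eval_mul, eval_pow, eval_X, Matrix.sub_apply, eval_sub] at h
    rw [laguerreWeight_eq_mul_self ht α, laguerreWeight_eq_mul_self ht (α - 1)]
    linear_combination laguerreWeight (α - 1 - 1) t * h

/-- the symmetry equations for the second Laguerre family hold on
`(0, ∞)` (derivatives entrywise). -/
theorem second_family_symmetry_equations (α b : ℝ)
    (hα : -1 < α) (hb : 0 < |b|) (hb1 : |b| < 1)
    (W F₁ F₂ : ℝ → Matrix (Fin 2) (Fin 2) ℝ) (F₀ : Matrix (Fin 2) (Fin 2) ℝ)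
    (hW : ∀ t : ℝ, W t = Real.exp (-t) • (t ^ α) •
      !![t ^ 4 + 4 * b ^ 2 * (α + 2) * t ^ 2 * (α + 2 - t), -b * t * (t - 2 * (α + 2));
         -b * t * (t - 2 * (α + 2)), 1])
    (hF₂ : ∀ t : ℝ, F₂ t = t • (1 : Matrix (Fin 2) (Fin 2) ℝ))
    (hF₁ : ∀ t : ℝ, F₁ t = !![α + 5 - t, 0; -4 * b * (α + 2) * t, α + 1 - t])
    (hF₀ : F₀ = !![-2, 0; 2 * b * (α + 2) * (α + 1), 0]) :
    ∀ t ∈ Set.Ioi (0 : ℝ),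
      (∀ i j : Fin 2,
        2 * deriv (fun s => (W s * F₂ s) i j) t = (W t * F₁ t + (F₁ t)ᵀ * W t) i j) ∧
      (∀ i j : Fin 2,
        deriv (deriv (fun s => (W s * F₂ s) i j)) t =
          deriv (fun s => (W s * F₁ s) i j) t - (W t * F₀) i j + (F₀ᵀ * W t) i j) :=
  second_family_symmetry_equations_general α b W F₁ F₂ F₀ hW hF₂ hF₁ hF₀
end

section
/- For β > 0, the matrix W(t) = e^{−t} t^{−1/2} [[(4t/β)(e^{√(βt)}+e^{−√(βt)}), (2√t/√β)(e^{√(βt)}−e^{−√(βt)})],[(2√t/√β)(e^{√(βt)}−e^{−√(βt)}), e^{√(βt)}+e^{−√(βt)}]] is symmetric positive definite for all t ∈ (0,∞), and all its entries multiplied by any power t^n are integrable on (0,∞). -/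
/-!
Writing `e^{±√(βt)}` through `cosh` and `sinh`,
`W(t) = 2 e^{-t} t^{-1/2} [[4t/β · cosh, 2√t/√β · sinh], [2√t/√β · sinh, cosh]]`,
so `det W(t) = 4 e^{-2t} t^{-1} · (4t/β) (cosh² - sinh²) = 16 e^{-2t}/β`.
Every entry is bounded by a constant times `t^a e^{-t} cosh (√β √t)` with `a ≥ -1/2`, and
AM-GM, `√β √t ≤ (β + t)/2`, turns this into `t^a e^{-t/2}` up to a constant, whose moments are
Gamma integrals.
-/

open Matrix Real MeasureTheory Set

theorem cosh_le_exp_abs (x : ℝ) : cosh x ≤ exp |x| := by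
  rw [cosh_eq]
  have hpos := exp_le_exp.mpr (le_abs_self x)
  have hneg := exp_le_exp.mpr (neg_le_abs x)
  linarith

theorem cosh_mul_sqrt_le (c : ℝ) {t : ℝ} (ht : 0 ≤ t) :
    cosh (c * √t) ≤ exp (c ^ 2 / 2) * exp (t / 2) := by
  have hAMGM : |c * √t| ≤ c ^ 2 / 2 + t / 2 := by
    rw [abs_mul, abs_of_nonneg (sqrt_nonneg t)]
    nlinarith [sq_nonneg (|c| - √t), sq_abs c, sq_sqrt ht]
  rw [← exp_add]
  exact (cosh_le_exp_abs _).trans (exp_le_exp.mpr hAMGM)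

theorem integrableOn_rpow_mul_exp_neg_mul_cosh (c : ℝ) {s : ℝ} (hs : -1 < s) :
    IntegrableOn (fun t ↦ t ^ s * exp (-t) * cosh (c * √t)) (Ioi 0) := by
  have hdom : IntegrableOn (fun t ↦ exp (c ^ 2 / 2) * (t ^ s * exp (-(1 / 2) * t))) (Ioi 0) := by
    have := integrableOn_rpow_mul_exp_neg_mul_rpow (p := 1) hs one_pos one_half_pos
    simp only [rpow_one] at this
    exact this.const_mul _
  refine hdom.mono' (by fun_prop : Measurable _).aestronglyMeasurable ?_
  rw [ae_restrict_iff' measurableSet_Ioi]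
  filter_upwards with t (ht : 0 < t)
  rw [Real.norm_of_nonneg (by positivity)]
  calc t ^ s * exp (-t) * cosh (c * √t)
      ≤ t ^ s * exp (-t) * (exp (c ^ 2 / 2) * exp (t / 2)) := by
        gcongr; exact cosh_mul_sqrt_le c ht.le
    _ = exp (c ^ 2 / 2) * (t ^ s * exp (-(1 / 2) * t)) := by
        rw [show -(1 / 2) * t = -t + t / 2 by ring, exp_add]; ring

theorem integrableOn_pow_mul_abs_of_abs_le {g : ℝ → ℝ} {K a c : ℝ}
    (hg : AEStronglyMeasurable g (volume.restrict (Ioi 0))) (ha : -1 < a)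
    (hle : ∀ t > 0, |g t| ≤ K * (t ^ a * exp (-t) * cosh (c * √t))) (n : ℕ) :
    IntegrableOn (fun t ↦ t ^ n * |g t|) (Ioi 0) := by
  have hna : -1 < (n : ℝ) + a := by linarith [n.cast_nonneg (α := ℝ)]
  refine ((integrableOn_rpow_mul_exp_neg_mul_cosh c hna).const_mul K).mono'
    ((continuous_pow n).aestronglyMeasurable.mul hg.norm) ?_
  rw [ae_restrict_iff' measurableSet_Ioi]
  filter_upwards with t (ht : 0 < t)
  rw [Real.norm_of_nonneg (by positivity), rpow_add ht, rpow_natCast]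
  calc t ^ n * |g t| ≤ t ^ n * (K * (t ^ a * exp (-t) * cosh (c * √t))) := by
        gcongr; exact hle t ht
    _ = _ := by ring

noncomputable def thirdFamilyWeight (β t : ℝ) : Matrix (Fin 2) (Fin 2) ℝ :=
  exp (-t) • (t ^ (-(1:ℝ)/2)) •
    !![(4 * t / β) * (exp (√(β * t)) + exp (-√(β * t))),
       (2 * √t / √β) * (exp (√(β * t)) - exp (-√(β * t)));
       (2 * √t / √β) * (exp (√(β * t)) - exp (-√(β * t))),
       exp (√(β * t)) + exp (-√(β * t))]

theorem transpose_thirdFamilyWeight (β t : ℝ) :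
    (thirdFamilyWeight β t)ᵀ = thirdFamilyWeight β t := by
  ext i j; fin_cases i <;> fin_cases j <;> rfl

theorem thirdFamilyWeight_eq (β t : ℝ) :
    thirdFamilyWeight β t = (2 * exp (-t) * t ^ (-(1:ℝ)/2)) •
      !![4 * t / β * cosh √(β * t), 2 * √t / √β * sinh √(β * t);
         2 * √t / √β * sinh √(β * t), cosh √(β * t)] := by
  ext i j
  fin_cases i <;> fin_cases j <;>
    simp only [thirdFamilyWeight, smul_of, smul_cons, smul_eq_mul, Matrix.smul_empty,
      Fin.zero_eta, Fin.isValue, Fin.mk_one, Matrix.smul_apply, of_apply, cons_val',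
      cons_val_zero, cons_val_one, cons_val_fin_one, cosh_eq, sinh_eq] <;> ring

theorem measurable_thirdFamilyWeight_apply (β : ℝ) (i j : Fin 2) :
    Measurable fun t ↦ thirdFamilyWeight β t i j := by
  simp only [thirdFamilyWeight_eq]
  fin_cases i <;> fin_cases j <;>
    simp only [Fin.zero_eta, Fin.isValue, Fin.mk_one, Matrix.smul_apply, of_apply, cons_val',
      cons_val_zero, cons_val_one, cons_val_fin_one, smul_eq_mul] <;> fun_prop

theorem det_thirdFamilyWeight {β t : ℝ} (hβ : 0 ≤ β) (ht : 0 < t) :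
    (thirdFamilyWeight β t).det = 16 * exp (-t) ^ 2 / β := by
  have hrpow : (t ^ (-(1:ℝ)/2)) ^ 2 * t = 1 := by
    rw [← rpow_natCast, ← rpow_mul ht.le, ← rpow_add_one ht.ne']; norm_num
  have hoff : (2 * √t / √β) ^ 2 = 4 * t / β := by
    rw [div_pow, mul_pow, sq_sqrt ht.le, sq_sqrt hβ]; norm_num
  rw [thirdFamilyWeight_eq, det_smul, Fintype.card_fin, det_fin_two_of]
  linear_combination (-4 * exp (-t) ^ 2 * (t ^ (-(1:ℝ)/2)) ^ 2 * sinh √(β * t) ^ 2) * hoff +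
    (16 * exp (-t) ^ 2 * (t ^ (-(1:ℝ)/2)) ^ 2 * t / β) * cosh_sq_sub_sinh_sq √(β * t) +
    (16 * exp (-t) ^ 2 / β) * hrpow

theorem thirdFamilyWeight_one_one_pos (β : ℝ) {t : ℝ} (ht : 0 < t) :
    0 < thirdFamilyWeight β t 1 1 := by
  rw [thirdFamilyWeight_eq]
  simp only [Matrix.smul_apply, of_apply, cons_val_one, cons_val_fin_one, smul_eq_mul]
  positivity

theorem exists_abs_thirdFamilyWeight_apply_le {β : ℝ} (hβ : 0 ≤ β) (i j : Fin 2) :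
    ∃ K a : ℝ, -1 < a ∧ ∀ t > 0,
      |thirdFamilyWeight β t i j| ≤ K * (t ^ a * exp (-t) * cosh (√β * √t)) := by
  have hhalf : ∀ t : ℝ, 0 < t → t ^ (-(1:ℝ)/2) * t = t ^ (1/2 : ℝ) := fun t ht ↦ by
    rw [← rpow_add_one ht.ne']; norm_num
  have hoff : ∀ t > 0, |2 * exp (-t) * t ^ (-(1:ℝ)/2) * (2 * √t / √β * sinh √(β * t))| ≤
      4 / √β * (t ^ (0:ℝ) * exp (-t) * cosh √(β * t)) := fun t ht ↦ by
    have hsinh : |sinh √(β * t)| ≤ cosh √(β * t) := by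
      rw [abs_sinh, ← cosh_abs]; exact (sinh_lt_cosh _).le
    have hrpow : t ^ (-(1:ℝ)/2) * √t = 1 := by
      rw [sqrt_eq_rpow, ← rpow_add ht]; norm_num
    calc _ = 4 / √β * (t ^ (-(1:ℝ)/2) * √t) * exp (-t) * |sinh √(β * t)| := by
          rw [← mul_assoc, abs_mul, abs_of_nonneg (by positivity)]; ring
      _ ≤ _ := by
          rw [hrpow, rpow_zero, mul_one, one_mul, ← mul_assoc]; gcongr
  simp only [thirdFamilyWeight_eq, ← sqrt_mul hβ]
  fin_cases i <;> fin_cases j <;>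
    simp only [Fin.zero_eta, Fin.isValue, Fin.mk_one, Matrix.smul_apply, of_apply, cons_val',
      cons_val_zero, cons_val_one, cons_val_fin_one, smul_eq_mul]
  · refine ⟨8 / β, 1 / 2, by norm_num, fun t ht ↦ le_of_eq ?_⟩
    rw [abs_of_nonneg (by positivity), ← hhalf t ht]
    ring
  · exact ⟨4 / √β, 0, by norm_num, hoff⟩
  · exact ⟨4 / √β, 0, by norm_num, hoff⟩
  · refine ⟨2, -1 / 2, by norm_num, fun t ht ↦ le_of_eq ?_⟩
    rw [abs_of_nonneg (by positivity)]
    ring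

/-- the weight of the third (new) Laguerre family is symmetric
positive definite on `(0, ∞)` and has finite moments of all orders. -/
theorem third_family_weight_posdef_integrable (β : ℝ) (hβ : 0 < β)
    (W : ℝ → Matrix (Fin 2) (Fin 2) ℝ)
    (hW : ∀ t : ℝ, W t = Real.exp (-t) • (t ^ (-(1:ℝ)/2)) •
      !![(4 * t / β) * (Real.exp (Real.sqrt (β * t)) + Real.exp (-Real.sqrt (β * t))),
         (2 * Real.sqrt t / Real.sqrt β) *
           (Real.exp (Real.sqrt (β * t)) - Real.exp (-Real.sqrt (β * t)));
         (2 * Real.sqrt t / Real.sqrt β) *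
           (Real.exp (Real.sqrt (β * t)) - Real.exp (-Real.sqrt (β * t))),
         Real.exp (Real.sqrt (β * t)) + Real.exp (-Real.sqrt (β * t))]) :
    (∀ t ∈ Set.Ioi (0 : ℝ), (W t)ᵀ = W t ∧ 0 < W t 1 1 ∧ 0 < (W t).det) ∧
    (∀ (n : ℕ) (i j : Fin 2),
      MeasureTheory.IntegrableOn (fun t : ℝ => t ^ n * |W t i j|) (Set.Ioi 0)) := by
  obtain rfl : W = thirdFamilyWeight β := funext hW
  refine ⟨fun t ht ↦ ⟨transpose_thirdFamilyWeight β t, thirdFamilyWeight_one_one_pos β ht, ?_⟩,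
    fun n i j ↦ ?_⟩
  · rw [det_thirdFamilyWeight hβ.le ht]
    positivity
  · obtain ⟨K, a, ha, hle⟩ := exists_abs_thirdFamilyWeight_apply_le hβ.le i j
    exact integrableOn_pow_mul_abs_of_abs_le
      (measurable_thirdFamilyWeight_apply β i j).aestronglyMeasurable ha hle n
end

section
/- For u > 0, c₂₂ > 0, c₂₁ ∈ ℝ, the integral ∫₀^∞ e^{−tu} t^{u(c₂₁ − 1/(u−v))} [k₂ + (k₁(u−v)/(2uv))(c₂₁ u t^{v/(u−v)} − v t^{u/(u−v)})] dt, with v = 2u and parameters such that all exponents exceed −1, equals zero if and only if k₂ = −c₂₁ k₁ (u−v)² u^{u/(v−u)} Γ(c₂₁u) / (2v Γ(c₂₁u − v/(u−v))). -/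
/-! With `v = 2u` and `c = c₂₁ u` the exponents collapse and the integrand becomes
`(k₂ t^(c+1) - (k₁ c₂₁ / 4) t^(c-1) + (k₁ / 2) t^c) e^(-ut)`. Integrating term by term against
`∫ t^s e^(-ut) = Γ(s+1) / u^(s+1)` and using `Γ(s+1) = s Γ(s)`, the integral is
`Γ(c) u^(-c) (c₂₁ / u) (k₂ (c+1) + k₁ u / 4)`, which vanishes iff `k₂ = -k₁ u / (4 (c+1))`;
this is the stated Gamma quotient because `Γ(c+2) = c (c+1) Γ(c)`. -/

open MeasureTheory Set Real

namespace Real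

theorem integrableOn_rpow_mul_exp_neg_mul_Ioi {s b : ℝ} (hs : -1 < s) (hb : 0 < b) :
    IntegrableOn (fun t : ℝ => t ^ s * exp (-(b * t))) (Ioi 0) := by
  simpa [rpow_one] using integrableOn_rpow_mul_exp_neg_mul_rpow hs one_pos hb

theorem integral_rpow_mul_exp_neg_mul_Ioi_eq_Gamma_div {s b : ℝ} (hs : -1 < s) (hb : 0 < b) :
    ∫ t in Ioi 0, t ^ s * exp (-(b * t)) = Gamma (s + 1) / b ^ (s + 1) := by
  have h := integral_rpow_mul_exp_neg_mul_Ioi (a := s + 1) (by linarith) hb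
  rwa [add_sub_cancel_right, div_rpow zero_le_one hb.le, one_rpow, one_div_mul_eq_div] at h

theorem integral_three_moments_mul_exp_neg_mul_Ioi {a b p q r : ℝ} (ha : 0 < a) (hb : 0 < b) :
    ∫ t in Ioi 0, (p * t ^ (a + 1) + q * t ^ (a - 1) + r * t ^ a) * exp (-(b * t)) =
      Gamma a / b ^ a * (p * a * (a + 1) / b ^ 2 + q + r * a / b) := by
  have hP := (integrableOn_rpow_mul_exp_neg_mul_Ioi (s := a + 1) (by linarith) hb).const_mul p
  have hQ := (integrableOn_rpow_mul_exp_neg_mul_Ioi (s := a - 1) (by linarith) hb).const_mul q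
  have hR := (integrableOn_rpow_mul_exp_neg_mul_Ioi (s := a) (by linarith) hb).const_mul r
  simp_rw [add_mul, mul_assoc]
  rw [integral_add ?_ hR, integral_add hP hQ, integral_const_mul, integral_const_mul,
    integral_const_mul, integral_rpow_mul_exp_neg_mul_Ioi_eq_Gamma_div (by linarith) hb,
    integral_rpow_mul_exp_neg_mul_Ioi_eq_Gamma_div (by linarith) hb,
    integral_rpow_mul_exp_neg_mul_Ioi_eq_Gamma_div (by linarith) hb, sub_add_cancel,
    add_assoc, Gamma_add_one (by positivity), Gamma_add_one ha.ne',
    rpow_add hb, rpow_add hb, rpow_one]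
  · field_simp
    ring
  · exact hP.add hQ

end Real

open Real

theorem offdiagonal_integrand_eq_moments {u c₂₁ k₁ k₂ t : ℝ} (hu : u ≠ 0) (ht : 0 < t) :
    exp (-(t * u)) * t ^ (u * (c₂₁ - 1 / (u - 2 * u))) *
        (k₂ + (k₁ * (u - 2 * u) / (2 * u * (2 * u))) *
          (c₂₁ * u * t ^ (2 * u / (u - 2 * u)) - 2 * u * t ^ (u / (u - 2 * u)))) =
      (k₂ * t ^ (c₂₁ * u + 1) + -(k₁ * c₂₁ / 4) * t ^ (c₂₁ * u - 1) + k₁ / 2 * t ^ (c₂₁ * u)) *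
        exp (-(u * t)) := by
  have hsub : u - 2 * u = -u := by ring
  have e₀ : u * (c₂₁ - 1 / (u - 2 * u)) = c₂₁ * u + 1 := by
    rw [hsub]; field_simp; ring
  have e₁ : 2 * u / (u - 2 * u) = -2 := by rw [hsub]; field_simp
  have e₂ : u / (u - 2 * u) = -1 := by rw [hsub]; field_simp
  have p₀ : t ^ (c₂₁ * u + 1) = t ^ (c₂₁ * u - 1) * t ^ 2 := by
    rw [← rpow_natCast, ← rpow_add ht]; norm_num; ring_nf
  have p₁ : t ^ (c₂₁ * u) = t ^ (c₂₁ * u - 1) * t := by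
    rw [← rpow_add_one ht.ne']; ring_nf
  rw [e₀, e₁, e₂, p₀, p₁, rpow_neg ht.le, rpow_neg ht.le, rpow_one, rpow_two, mul_comm t u]
  field_simp
  ring

theorem offdiagonal_moment_vanishes_iff_general (u v c₂₁ k₁ k₂ : ℝ)
    (hu : 0 < u) (hv : v = 2 * u)
    (he₁ : -1 < u * (c₂₁ - 1 / (u - v)) + v / (u - v)) :
    (∫ t in Set.Ioi (0 : ℝ),
        Real.exp (-(t * u)) * t ^ (u * (c₂₁ - 1 / (u - v))) *
          (k₂ + (k₁ * (u - v) / (2 * u * v)) *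
            (c₂₁ * u * t ^ (v / (u - v)) - v * t ^ (u / (u - v))))) = 0 ↔
      k₂ = -(c₂₁ * k₁ * (u - v) ^ 2 * u ^ (u / (v - u)) * Real.Gamma (c₂₁ * u)) /
            (2 * v * Real.Gamma (c₂₁ * u - v / (u - v))) := by
  subst hv
  have e₁ : 2 * u / (u - 2 * u) = -2 := by field_simp; ring
  have e₂ : u / (2 * u - u) = 1 := by field_simp; ring
  have e₀ : u * (c₂₁ - 1 / (u - 2 * u)) = c₂₁ * u + 1 := by field_simp; ring
  rw [e₀, e₁] at he₁
  have hc : 0 < c₂₁ * u := by linarith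
  rw [setIntegral_congr_fun measurableSet_Ioi
      fun t ht => offdiagonal_integrand_eq_moments hu.ne' ht,
    integral_three_moments_mul_exp_neg_mul_Ioi hc hu, e₁, e₂, rpow_one, sub_neg_eq_add,
    show c₂₁ * u + 2 = c₂₁ * u + 1 + 1 by ring, Gamma_add_one (by positivity),
    Gamma_add_one hc.ne', mul_eq_zero, or_iff_right (by positivity)]
  have hΓ := (Gamma_pos_of_pos hc).ne'
  have hc₂₁ : c₂₁ ≠ 0 := by rintro rfl; simp at hc
  constructor <;> intro h
  · field_simp at h ⊢
    have h' := (mul_eq_zero.mp (h.trans (mul_zero _))).resolve_left hc₂₁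
    linear_combination h' / 2
  · rw [h]
    field_simp
    ring

/-- the off-diagonal moment vanishing condition in the case
`v = 2u`: the integral of `w₁₂` over `(0,∞)` vanishes iff `k₂` has the stated
value in terms of Gamma functions. -/
theorem offdiagonal_moment_vanishes_iff (u v c₂₁ c₂₂ k₁ k₂ : ℝ)
    (hu : 0 < u) (hc₂₂ : 0 < c₂₂) (hv : v = 2 * u)
    (hgamma : v / (u - v) < c₂₁ * u)
    (he₀ : -1 < u * (c₂₁ - 1 / (u - v)))
    (he₁ : -1 < u * (c₂₁ - 1 / (u - v)) + v / (u - v))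
    (he₂ : -1 < u * (c₂₁ - 1 / (u - v)) + u / (u - v)) :
    (∫ t in Set.Ioi (0 : ℝ),
        Real.exp (-(t * u)) * t ^ (u * (c₂₁ - 1 / (u - v))) *
          (k₂ + (k₁ * (u - v) / (2 * u * v)) *
            (c₂₁ * u * t ^ (v / (u - v)) - v * t ^ (u / (u - v))))) = 0 ↔
      k₂ = -(c₂₁ * k₁ * (u - v) ^ 2 * u ^ (u / (v - u)) * Real.Gamma (c₂₁ * u)) /
            (2 * v * Real.Gamma (c₂₁ * u - v / (u - v))) :=
  offdiagonal_moment_vanishes_iff_general u v c₂₁ k₁ k₂ hu hv he₁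
end

section
/- Let u > 0, c₂₂ > 0, c₂₁ ∈ ℝ with c₂₂ > 2c₂₁u/(c₂₂ − c₂₁u) and c₂₂ ≠ c₂₁u, and γ > 0. Then W(t) = e^{−tu} t^{c₂₂−1} [[γ t^{2c₂₁u/(c₂₁u − c₂₂)} + ((c₂₂−c₂₁u)(c₂₂−tu)/(2uc₂₂))², (c₂₂−c₂₁u)(c₂₂−tu)/(2uc₂₂)],[(c₂₂−c₂₁u)(c₂₂−tu)/(2uc₂₂), 1]] is positive definite for all t ∈ (0,∞) and integrable on (0,∞) (all entries, all moments). -/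
/-!
Writing `f` for the affine function `(c₂₂ - c₂₁ u)(c₂₂ - t u)/(2 u c₂₂)`, the weight is
`ρ(t) · (γ t^β e₁e₁ᵀ + (f, 1)(f, 1)ᵀ)` with `ρ(t) = t^(c₂₂-1) e^(-tu)`, so its determinant is
`ρ² γ t^β > 0`. Every entry times `tⁿ` is a combination of `t^p e^(-tu)` with `p > -1`, hence a
convergent Gamma-type integral; the worst exponent, `c₂₂ - 1 + β` with `β = 2c₂₁u/(c₂₁u - c₂₂)`,
exceeds `-1` exactly by the inequality on `c₂₂`.
-/

open MeasureTheory Set Real Polynomial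

theorem integrableOn_rpow_mul_exp_neg_mul {s u : ℝ} (hs : -1 < s) (hu : 0 < u) :
    IntegrableOn (fun t : ℝ => t ^ s * exp (-(t * u))) (Ioi 0) :=
  (integrableOn_rpow_mul_exp_neg_mul_rpow hs one_pos hu).congr_fun
    (fun t _ => by simp only [rpow_one, neg_mul, mul_comm u]) measurableSet_Ioi

theorem Polynomial.integrableOn_eval_mul_rpow_mul_exp_neg_mul (P : ℝ[X]) {s u : ℝ}
    (hs : -1 < s) (hu : 0 < u) :
    IntegrableOn (fun t : ℝ => P.eval t * (t ^ s * exp (-(t * u)))) (Ioi 0) := by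
  induction P using Polynomial.induction_on' with
  | add P Q hP hQ =>
    exact IntegrableOn.congr_fun (hP.add hQ) (fun t _ => by simp [add_mul]) measurableSet_Ioi
  | monomial k a =>
    have hks : -1 < k + s := by linarith [k.cast_nonneg (α := ℝ)]
    refine IntegrableOn.congr_fun ((integrableOn_rpow_mul_exp_neg_mul hks hu).const_mul a)
      (fun t ht => ?_) measurableSet_Ioi
    simp only [eval_monomial, rpow_add ht, rpow_natCast]
    ring

theorem Matrix.det_smul_fin_two_add_sq (r s f : ℝ) :
    (r • !![s + f ^ 2, f; f, 1]).det = r ^ 2 * s := by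
  simp only [det_smul, Fintype.card_fin, det_fin_two_of]
  ring

noncomputable def vequWeight (u s γ β : ℝ) (L : ℝ[X]) (t : ℝ) : Matrix (Fin 2) (Fin 2) ℝ :=
  (t ^ s * exp (-(t * u))) • !![γ * t ^ β + L.eval t ^ 2, L.eval t; L.eval t, 1]

section vequWeight

variable {u s γ β : ℝ} {L : ℝ[X]} {t : ℝ}

theorem vequWeight_one_one_pos (ht : 0 < t) : 0 < vequWeight u s γ β L t 1 1 := by
  simp only [vequWeight, Matrix.smul_apply, Matrix.of_apply, Matrix.cons_val',
    Matrix.cons_val_one, Matrix.cons_val_fin_one, smul_eq_mul, mul_one]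
  positivity

theorem det_vequWeight_pos (hγ : 0 < γ) (ht : 0 < t) : 0 < (vequWeight u s γ β L t).det := by
  rw [vequWeight, Matrix.det_smul_fin_two_add_sq]
  positivity

theorem integrableOn_pow_mul_abs_vequWeight_apply (hu : 0 < u) (hs : -1 < s)
    (hβs : -1 < β + s) (n : ℕ) (i j : Fin 2) :
    IntegrableOn (fun t => t ^ n * |vequWeight u s γ β L t i j|) (Ioi 0) := by
  suffices ∀ i j, IntegrableOn (fun t => t ^ n * vequWeight u s γ β L t i j) (Ioi 0) from
    IntegrableOn.congr_fun (this i j).abs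
      (fun t (ht : 0 < t) => by rw [abs_mul, abs_of_pos (pow_pos ht n)]) measurableSet_Ioi
  have hρ (P : ℝ[X]) := P.integrableOn_eval_mul_rpow_mul_exp_neg_mul hs hu
  simp only [Fin.forall_fin_two, vequWeight, Matrix.smul_apply, Matrix.of_apply,
    Matrix.cons_val_zero, Matrix.cons_val_one, smul_eq_mul]
  refine ⟨⟨?_, ?_⟩, ?_, ?_⟩
  · refine IntegrableOn.congr_fun
      (((X ^ n).integrableOn_eval_mul_rpow_mul_exp_neg_mul hβs hu).const_mul γ |>.add
      (hρ (X ^ n * L ^ 2))) (fun t (ht : 0 < t) => ?_) measurableSet_Ioi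
    simp only [Pi.add_apply, eval_mul, eval_pow, eval_X, rpow_add ht]
    ring
  · exact (hρ (X ^ n * L)).congr_fun (fun t _ => by simp only [eval_mul, eval_pow, eval_X]; ring)
      measurableSet_Ioi
  · exact (hρ (X ^ n * L)).congr_fun (fun t _ => by simp only [eval_mul, eval_pow, eval_X]; ring)
      measurableSet_Ioi
  · exact (hρ (X ^ n)).congr_fun (fun t _ => by simp only [eval_pow, eval_X]; ring)
      measurableSet_Ioi

end vequWeight

theorem vequ_weight_posdef_integrable_general (u c₂₁ c₂₂ γ : ℝ)
    (hu : 0 < u) (hc₂₂ : 0 < c₂₂) (hγ : 0 < γ)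
    (hineq : 2 * c₂₁ * u / (c₂₂ - c₂₁ * u) < c₂₂)
    (W : ℝ → Matrix (Fin 2) (Fin 2) ℝ)
    (hW : ∀ t : ℝ, W t = Real.exp (-(t * u)) • (t ^ (c₂₂ - 1)) •
      !![γ * t ^ (2 * c₂₁ * u / (c₂₁ * u - c₂₂)) +
           ((c₂₂ - c₂₁ * u) * (c₂₂ - t * u) / (2 * u * c₂₂)) ^ 2,
         (c₂₂ - c₂₁ * u) * (c₂₂ - t * u) / (2 * u * c₂₂);
         (c₂₂ - c₂₁ * u) * (c₂₂ - t * u) / (2 * u * c₂₂), 1]) :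
    (∀ t ∈ Set.Ioi (0 : ℝ), 0 < W t 1 1 ∧ 0 < (W t).det) ∧
    (∀ (n : ℕ) (i j : Fin 2),
      MeasureTheory.IntegrableOn (fun t : ℝ => t ^ n * |W t i j|) (Set.Ioi 0)) := by
  set β := 2 * c₂₁ * u / (c₂₁ * u - c₂₂)
  set L : ℝ[X] := C ((c₂₂ - c₂₁ * u) / (2 * u * c₂₂)) * (C c₂₂ - X * C u)
  have hW' : W = vequWeight u (c₂₂ - 1) γ β L := by
    ext1 t
    have hL : L.eval t = (c₂₂ - c₂₁ * u) * (c₂₂ - t * u) / (2 * u * c₂₂) := by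
      simp only [L, eval_mul, eval_C, eval_sub, eval_X]
      ring
    rw [hW, smul_comm, smul_smul, vequWeight, hL]
  have hβ : -1 < β + (c₂₂ - 1) := by
    have : β = -(2 * c₂₁ * u / (c₂₂ - c₂₁ * u)) := by
      rw [← div_neg, neg_sub]
    linarith
  subst hW'
  exact ⟨fun t ht => ⟨vequWeight_one_one_pos ht, det_vequWeight_pos hγ ht⟩,
    integrableOn_pow_mul_abs_vequWeight_apply hu (by linarith) hβ⟩

/-- the weight from the case `|v| = |u|` is positive definite on
`(0, ∞)` and all its entries have finite moments of all orders. -/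
theorem vequ_weight_posdef_integrable (u c₂₁ c₂₂ γ : ℝ)
    (hu : 0 < u) (hc₂₂ : 0 < c₂₂) (hγ : 0 < γ)
    (hne : c₂₂ ≠ c₂₁ * u) (hineq : 2 * c₂₁ * u / (c₂₂ - c₂₁ * u) < c₂₂)
    (W : ℝ → Matrix (Fin 2) (Fin 2) ℝ)
    (hW : ∀ t : ℝ, W t = Real.exp (-(t * u)) • (t ^ (c₂₂ - 1)) •
      !![γ * t ^ (2 * c₂₁ * u / (c₂₁ * u - c₂₂)) +
           ((c₂₂ - c₂₁ * u) * (c₂₂ - t * u) / (2 * u * c₂₂)) ^ 2,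
         (c₂₂ - c₂₁ * u) * (c₂₂ - t * u) / (2 * u * c₂₂);
         (c₂₂ - c₂₁ * u) * (c₂₂ - t * u) / (2 * u * c₂₂), 1]) :
    (∀ t ∈ Set.Ioi (0 : ℝ), 0 < W t 1 1 ∧ 0 < (W t).det) ∧
    (∀ (n : ℕ) (i j : Fin 2),
      MeasureTheory.IntegrableOn (fun t : ℝ => t ^ n * |W t i j|) (Set.Ioi 0)) :=
  vequ_weight_posdef_integrable_general u c₂₁ c₂₂ γ hu hc₂₂ hγ hineq W hW
end
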